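/- Search-state invariant (at most one non-decomposition coordinate): let Φ be a finite set of leaf specifications; for each φ ∈ Φ let Q_φ be a set of automaton states, D_φ ⊆ Q_φ a set of decomposition states, and Q⁰_φ ⊆ D_φ a set of initial automaton states. A search state is a pair (φ_act, q) where φ_act ∈ Φ is the active specification and q assigns to each φ ∈ Φ an element q(φ) ∈ Q_φ. The transition relation on search states allows exactly two kinds of steps: (i) in-spec steps (φ_act, q) → (φ_act, q′) where q′(φ) = q(φ) for all φ ≠ φ_act and q′(φ_act) ∈ Q_{φ_act} is arbitrary; and (ii) switch steps (φ_act, q) → (φ′_act, q) with φ′_act ≠ φ_act, allowed only when q(φ_act) ∈ D_{φ_act} and q(φ′_act) ∈ D_{φ′_act}. Then every search state (φ_act, q) reachable (by the reflexive–transitive closure of this transition relation) from an initial search state (φ₀, q₀) with q₀(φ) ∈ Q⁰_φ for all φ ∈ Φ satisfies: q(φ) ∈ D_φ for every φ ≠ φ_act. In particular, among all coordinates of q, at most one—namely the active one—lies outside its decomposition set. -/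

import Mathlib

/-
Being at a decomposition state in every non-active coordinate is an inductive invariant:
an in-spec step changes only the active coordinate, and a switch step leaves `q` alone
while the coordinate it deactivates is at a decomposition state by the switch guard.
Initial states satisfy it because `Q0 φ ⊆ D φ`.
-/

/-- Transition relation on search states `(φ_act, q)`, where `φ_act : Φ` is the
active leaf specification and `q : Φ → QS` assigns to each leaf specification
its current automaton state.  There are exactly two kinds of steps:
(i) in-spec steps, which keep the active specification, keep `q φ` for all
`φ ≠ φ_act`, and set `q' φ_act` to an arbitrary element of `Q φ_act`; and
(ii) switch steps, which change the active specification to some `φ'_act ≠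
φ_act` and keep `q` unchanged, allowed only when `q φ_act ∈ D φ_act` and
`q φ'_act ∈ D φ'_act`. -/
def SearchStep {Φ QS : Type} (Q D : Φ → Set QS) :
    Φ × (Φ → QS) → Φ × (Φ → QS) → Prop :=
  fun v v' =>
    (v'.1 = v.1 ∧ (∀ φ, φ ≠ v.1 → v'.2 φ = v.2 φ) ∧ v'.2 v.1 ∈ Q v.1) ∨
    (v'.1 ≠ v.1 ∧ v'.2 = v.2 ∧ v.2 v.1 ∈ D v.1 ∧ v.2 v'.1 ∈ D v'.1)

def OffActiveInDecomposition {Φ QS : Type} (D : Φ → Set QS) (v : Φ × (Φ → QS)) : Prop :=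
  ∀ φ, φ ≠ v.1 → v.2 φ ∈ D φ

theorem SearchStep.offActiveInDecomposition {Φ QS : Type} {Q D : Φ → Set QS}
    {v w : Φ × (Φ → QS)} (hstep : SearchStep Q D v w) (hv : OffActiveInDecomposition D v) :
    OffActiveInDecomposition D w := by
  intro φ hφ
  rcases hstep with ⟨hact, hframe, -⟩ | ⟨-, hq, hguard, -⟩
  · rw [hact] at hφ
    rw [hframe φ hφ]
    exact hv φ hφ
  · rw [hq]
    by_cases hφv : φ = v.1
    · exact hφv ▸ hguard
    · exact hv φ hφv

theorem Relation.ReflTransGen.offActiveInDecomposition {Φ QS : Type} {Q D : Φ → Set QS}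
    {v w : Φ × (Φ → QS)} (hreach : Relation.ReflTransGen (SearchStep Q D) v w)
    (hv : OffActiveInDecomposition D v) : OffActiveInDecomposition D w := by
  induction hreach with
  | refl => exact hv
  | tail _ hstep ih => exact hstep.offActiveInDecomposition ih

theorem search_state_invariant_general {Φ QS : Type}
    (Q D Q0 : Φ → Set QS)
    (hQ0 : ∀ φ, Q0 φ ⊆ D φ)
    (φ₀ : Φ) (q₀ : Φ → QS) (hinit : ∀ φ, q₀ φ ∈ Q0 φ)
    (v : Φ × (Φ → QS))
    (hreach : Relation.ReflTransGen (SearchStep Q D) (φ₀, q₀) v) :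
    ∀ φ, φ ≠ v.1 → v.2 φ ∈ D φ :=
  hreach.offActiveInDecomposition fun φ _ => hQ0 φ (hinit φ)

/-- Search-state invariant: let `Φ` be a finite set of leaf specifications,
with automaton states `Q φ`, decomposition states `D φ ⊆ Q φ` and initial
automaton states `Q0 φ ⊆ D φ` for each `φ ∈ Φ`.  Then every search state
`(φ_act, q)` reachable (by the reflexive–transitive closure of the transition
relation) from an initial search state `(φ₀, q₀)` with `q₀ φ ∈ Q0 φ` for all
`φ` satisfies `q φ ∈ D φ` for every `φ ≠ φ_act`: at most one coordinate —
namely the active one — lies outside its decomposition set. -/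
theorem search_state_invariant {Φ QS : Type} [Fintype Φ]
    (Q D Q0 : Φ → Set QS)
    (hDQ : ∀ φ, D φ ⊆ Q φ) (hQ0 : ∀ φ, Q0 φ ⊆ D φ)
    (φ₀ : Φ) (q₀ : Φ → QS) (hinit : ∀ φ, q₀ φ ∈ Q0 φ)
    (v : Φ × (Φ → QS))
    (hreach : Relation.ReflTransGen (SearchStep Q D) (φ₀, q₀) v) :
    ∀ φ, φ ≠ v.1 → v.2 φ ∈ D φ :=
  search_state_invariant_general Q D Q0 hQ0 φ₀ q₀ hinit v hreach
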